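/- Each λ_i is a Laurent polynomial in the initial variables: for 1 ≤ i ≤ N−2, λ_i = (α_i/α_{i+1}) · (x_{i+1} + y_{i+2} x_{i+3}) / (y_{i+1} x_{i+2}); λ_{N−1} = (α_{N−1}/α_N) · (x_1 x_N + y_1 y_{N+1} x_2 x_{N+1} + y_{N+1}) / (y_N x_1 x_{N+1}); and λ_N = (x_1 + y_2 x_3) / (α_1 α_{N+1} y_1 x_2). -/
import Mathlib


/-- The once-mutated cluster variables `x_i^1`:
`x_1^1 = (y_1 x_{N+1} x_2 + 1)/x_1`, `x_i^1 = (y_i x_{i-1}^1 x_{i+1} + 1)/x_i` for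
`2 ≤ i ≤ N`, and `x_{N+1}^1 = (y_{N+1} x_N^1 x_1^1 + 1)/x_{N+1}`. -/
def xone {K : Type*} [Field K] (N : ℕ) (x y : ℕ → K) : ℕ → K
  | 0 => 0
  | 1 => (y 1 * x (N + 1) * x 2 + 1) / x 1
  | i + 2 =>
    if i + 2 = N + 1 then
      (y (N + 1) * xone N x y (i + 1) * xone N x y 1 + 1) / x (N + 1)
    else (y (i + 2) * xone N x y (i + 1) * x (i + 3) + 1) / x (i + 2)

lemma xone_eq {K : Type*} [Field K] (N : ℕ) (x y : ℕ → K) (i : ℕ) (h2 : 2 ≤ i) (hiN : i ≤ N) :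
    xone N x y i = (y i * xone N x y (i - 1) * x (i + 1) + 1) / x i := by
  obtain ⟨j, rfl⟩ : ∃ j, i = j + 2 := ⟨i - 2, by omega⟩
  rw [show j + 2 = (j).succ.succ from rfl, xone.eq_3, if_neg (by omega : ¬ j + 2 = N + 1)]
  norm_num

lemma xone_top {K : Type*} [Field K] (N : ℕ) (x y : ℕ → K) (hN : 2 ≤ N) :
    xone N x y (N + 1) =
      (y (N + 1) * xone N x y N * xone N x y 1 + 1) / x (N + 1) := by
  obtain ⟨j, hj⟩ : ∃ j, N + 1 = j + 2 := ⟨N - 1, by omega⟩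
  have hjN : j + 1 = N := by omega
  rw [hj, show j + 2 = (j).succ.succ from rfl, xone.eq_3,
    if_pos (by omega : j + 2 = N + 1), hjN, show (j.succ.succ : ℕ) = N + 1 from hj.symm]

lemma xone_one {K : Type*} [Field K] (N : ℕ) (x y : ℕ → K) :
    xone N x y 1 = (y 1 * x (N + 1) * x 2 + 1) / x 1 := by rw [xone]

theorem stmt10 {K : Type*} [Field K] (N : ℕ) (hN : 2 ≤ N) (x y α : ℕ → K)
    (hx : ∀ i, 1 ≤ i → i ≤ N + 1 → x i ≠ 0)
    (hy : ∀ j, 1 ≤ j → j ≤ N + 1 → y j ≠ 0)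
    (hα : ∀ i, 1 ≤ i → i ≤ N + 1 → α i ≠ 0)
    (hx1 : ∀ i, 1 ≤ i → i ≤ N + 1 → xone N x y i ≠ 0)
    (hα1 : ∀ i, 2 ≤ i → i ≤ N → α (i + 1) = α (i - 1) * (y i)⁻¹)
    (hα2 : α 2 * α (N + 1) = (y 1)⁻¹)
    (hα3 : α 1 * α N = y (N + 1))
    -- `z_i^1 := α_i x_i^1`
    (z : ℕ → K) (hzdef : ∀ i, z i = α i * xone N x y i)
    -- the Laurent polynomials `λ_1, …, λ_N`
    (lam : ℕ → K)
    (hlam : ∀ i, 1 ≤ i → i ≤ N - 1 → lam i = (z i + z (i + 2)) / z (i + 1))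
    (hlamN : lam N = (z 1 * z N + z 2 * z (N + 1) + 1) / (z 1 * z (N + 1))) :
    (∀ i, 1 ≤ i → i ≤ N - 2 →
        lam i = α i / α (i + 1) *
          ((x (i + 1) + y (i + 2) * x (i + 3)) / (y (i + 1) * x (i + 2)))) ∧
    lam (N - 1) = α (N - 1) / α N *
        ((x 1 * x N + y 1 * y (N + 1) * x 2 * x (N + 1) + y (N + 1)) /
          (y N * x 1 * x (N + 1))) ∧
    lam N = (x 1 + y 2 * x 3) / (α 1 * α (N + 1) * y 1 * x 2) := by
  refine ⟨?_, ?_, ?_⟩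
  · intro i h1 h2
    have hiN : i + 2 ≤ N := by omega
    rw [hlam i h1 (by omega), hzdef, hzdef, hzdef]
    have hα' : α (i + 2) = α i * (y (i + 1))⁻¹ := by
      have := hα1 (i + 1) (by omega) (by omega)
      simpa using this
    have E1 : xone N x y (i + 1) * x (i + 1) = y (i + 1) * xone N x y i * x (i + 2) + 1 := by
      have h := xone_eq N x y (i + 1) (by omega) (by omega)
      simp only [Nat.add_sub_cancel] at h
      rw [h, div_mul_cancel₀ _ (hx (i + 1) (by omega) (by omega))]
    have E2 : xone N x y (i + 2) =
        (y (i + 2) * xone N x y (i + 1) * x (i + 3) + 1) / x (i + 2) := by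
      have h := xone_eq N x y (i + 2) (by omega) (by omega)
      simpa using h
    have n1 := hx (i + 1) (by omega) (by omega)
    have n2 := hx (i + 2) (by omega) (by omega)
    have n3 := hy (i + 1) (by omega) (by omega)
    have n4 := hα (i + 1) (by omega) (by omega)
    have n5 := hx1 (i + 1) (by omega) (by omega)
    have hXi : xone N x y i =
        (xone N x y (i + 1) * x (i + 1) - 1) / (y (i + 1) * x (i + 2)) := by
      field_simp
      linear_combination -E1
    rw [hXi, E2, hα']
    field_simp
    ring
  · rw [hlam (N - 1) (by omega) (by omega), show N - 1 + 2 = N + 1 from by omega,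
      show N - 1 + 1 = N from by omega, hzdef, hzdef, hzdef]
    have n1 := hx 1 (by omega) (by omega)
    have n2 := hx N (by omega) (by omega)
    have n3 := hx (N + 1) (by omega) (by omega)
    have n4 := hy N (by omega) (by omega)
    have n5 := hα N (by omega) (by omega)
    have m1 := hx1 N (by omega) (by omega)
    have hαc : α (N + 1) * y N = α (N - 1) := by
      rw [hα1 N hN le_rfl]; field_simp
    have ENc : xone N x y N * x N = y N * xone N x y (N - 1) * x (N + 1) + 1 := by
      rw [xone_eq N x y N hN le_rfl, div_mul_cancel₀ _ n2]
    have Etopc : xone N x y (N + 1) * x (N + 1)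
        = y (N + 1) * xone N x y N * xone N x y 1 + 1 := by
      rw [xone_top N x y hN, div_mul_cancel₀ _ n3]
    have e1c : xone N x y 1 * x 1 = y 1 * x (N + 1) * x 2 + 1 := by
      rw [xone_one, div_mul_cancel₀ _ n1]
    rw [div_mul_div_comm, div_eq_div_iff (mul_ne_zero n5 m1)
      (mul_ne_zero n5 (mul_ne_zero (mul_ne_zero n4 n1) n3))]
    linear_combination
      (α N * x 1 * x (N + 1) * xone N x y (N + 1)) * hαc -
      (α N * α (N - 1) * x 1) * ENc +
      (α N * α (N - 1) * x 1) * Etopc +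
      (α N * α (N - 1) * y (N + 1) * xone N x y N) * e1c
  · rw [hlamN, hzdef, hzdef, hzdef, hzdef]
    have n1 := hx 1 (by omega) (by omega)
    have n2 := hx 2 (by omega) (by omega)
    have n3 := hx 3 (by omega) (by omega)
    have n4 := hx (N + 1) (by omega) (by omega)
    have n5 := hy 1 (by omega) (by omega)
    have n6 := hy 2 (by omega) (by omega)
    have n7 := hy (N + 1) (by omega) (by omega)
    have n8 := hα 1 (by omega) (by omega)
    have n9 := hα (N + 1) (by omega) (by omega)
    have m1 := hx1 1 (by omega) (by omega)
    have m2 := hx1 (N + 1) (by omega) (by omega)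
    have hα2c : α 2 * α (N + 1) * y 1 = 1 := by
      rw [hα2]; field_simp
    have Etop : xone N x y (N + 1) * x (N + 1)
        = y (N + 1) * xone N x y N * xone N x y 1 + 1 := by
      rw [xone_top N x y hN, div_mul_cancel₀ _ n4]
    have e2c : xone N x y 2 * x 2 = y 2 * xone N x y 1 * x 3 + 1 := by
      have h := xone_eq N x y 2 (by omega) hN
      rw [h, div_mul_cancel₀ _ n2]
    have e1c : xone N x y 1 * x 1 = y 1 * x (N + 1) * x 2 + 1 := by
      rw [xone_one, div_mul_cancel₀ _ n1]
    rw [div_eq_div_iff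
      (mul_ne_zero (mul_ne_zero n8 m1) (mul_ne_zero n9 m2))
      (mul_ne_zero (mul_ne_zero (mul_ne_zero n8 n9) n5) n2)]
    linear_combination
      (y 1 * x 2 * α 1 * α (N + 1) * xone N x y 1 * xone N x y N) * hα3 +
      (α 1 * α (N + 1) * x 2 * xone N x y 2 * xone N x y (N + 1)) * hα2c -
      (y 1 * x 2 * α 1 * α (N + 1)) * Etop +
      (α 1 * α (N + 1) * xone N x y (N + 1)) * e2c -
      (α 1 * α (N + 1) * xone N x y (N + 1)) * e1c
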